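/- arXiv:2604.05566 — 2 statements merged into one kernel-verified Lean document; each statement's English description precedes it below -/
import Mathlib

section
/- Let E be a real inner product space (the control space) and X a real normed vector space (the trajectory space). Let U ⊆ E be a nonempty, compact, convex set. Let Φ : E → X and m : E → X be two trajectory maps, and let F : X → E → ℝ be a cost functional such that for every u ∈ U the map x ↦ F x u is K_J-Lipschitz with K_J > 0. Define J₁(u) := F (Φ u) u and J₂(u) := F (m u) u. Assume there exists M ≥ 0 such that ‖Φ u − m u‖ ≤ M for all u ∈ U, and assume J₁ is differentiable on U and μ-strongly convex on U for some μ > 0. If u⋆ ∈ U minimizes J₁ over U and û ∈ U minimizes J₂ over U, then ‖u⋆ − û‖ ≤ 2 · √(K_J · M / μ). -/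
/-- **Proposition 1.** If the surrogate trajectory map `m` approximates the true
solver `Φ` uniformly within `M` on a nonempty compact convex control set `U`,
the cost `F` is `K_J`-Lipschitz in the trajectory argument for every control
`u ∈ U`, and the true objective `J₁ u = F (Φ u) u` is differentiable and
`μ`-strongly convex on `U`, then the minimizers of the true and surrogate
objectives over `U` satisfy `‖u⋆ − û‖ ≤ 2 √(K_J M / μ)`. -/
theorem sdo_warm_start_bound
    {E : Type*} [NormedAddCommGroup E] [InnerProductSpace ℝ E]
    {X : Type*} [NormedAddCommGroup X] [NormedSpace ℝ X]
    (U : Set E) (hUne : U.Nonempty) (hUcompact : IsCompact U) (hUconvex : Convex ℝ U)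
    (Φ m : E → X) (F : X → E → ℝ)
    (K_J : ℝ) (hK : 0 < K_J)
    (hLip : ∀ u ∈ U, ∀ x y : X, |F x u - F y u| ≤ K_J * ‖x - y‖)
    (M : ℝ) (hM : 0 ≤ M)
    (hMbound : ∀ u ∈ U, ‖Φ u - m u‖ ≤ M)
    (μ : ℝ) (hμ : 0 < μ)
    (hdiff : DifferentiableOn ℝ (fun u => F (Φ u) u) U)
    (hsc : StrongConvexOn U μ (fun u => F (Φ u) u))
    (ustar uhat : E) (hustar : ustar ∈ U) (huhat : uhat ∈ U)
    (hmin1 : IsMinOn (fun u => F (Φ u) u) U ustar)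
    (hmin2 : IsMinOn (fun u => F (m u) u) U uhat) :
    ‖ustar - uhat‖ ≤ 2 * Real.sqrt (K_J * M / μ) := by
  set J₁ := fun u => F (Φ u) u with hJ1
  set J₂ := fun u => F (m u) u with hJ2
  set d := ‖ustar - uhat‖ with hd
  -- Gap bound: J₁ û - J₁ u⋆ ≤ 2 K_J M
  have h1 : J₁ uhat - J₂ uhat ≤ K_J * M := by
    calc J₁ uhat - J₂ uhat ≤ |F (Φ uhat) uhat - F (m uhat) uhat| := le_abs_self _
      _ ≤ K_J * ‖Φ uhat - m uhat‖ := hLip uhat huhat _ _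
      _ ≤ K_J * M := by gcongr; exact hMbound uhat huhat
  have h2 : J₂ ustar - J₁ ustar ≤ K_J * M := by
    calc J₂ ustar - J₁ ustar ≤ |F (m ustar) ustar - F (Φ ustar) ustar| := le_abs_self _
      _ ≤ K_J * ‖m ustar - Φ ustar‖ := hLip ustar hustar _ _
      _ ≤ K_J * M := by
          gcongr
          rw [norm_sub_rev]; exact hMbound ustar hustar
  have h3 : J₂ uhat ≤ J₂ ustar := hmin2 hustar
  have hgap : J₁ uhat - J₁ ustar ≤ 2 * (K_J * M) := by linarith
  -- Strong convexity + minimality: (μ/2) d² ≤ J₁ û - J₁ u⋆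
  have key : ∀ t : ℝ, t ∈ Set.Ioo (0:ℝ) 1 →
      (1 - t) * (μ / 2 * d ^ 2) ≤ J₁ uhat - J₁ ustar := by
    intro t ht
    obtain ⟨ht0, ht1⟩ := ht
    have hab : (1 - t) + t = 1 := by ring
    have hconv := hsc.2 hustar huhat (by linarith) ht0.le hab
    have hmem : (1 - t) • ustar + t • uhat ∈ U :=
      hUconvex hustar huhat (by linarith) ht0.le hab
    have hmin := hmin1 hmem
    simp only [smul_eq_mul] at hconv
    have : J₁ ustar ≤ (1 - t) * J₁ ustar + t * J₁ uhat -
        (1 - t) * t * (μ / 2 * d ^ 2) := le_trans hmin hconv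
    have ht' : 0 < t := ht0
    nlinarith [sq_nonneg d, mul_pos ht0 (sub_pos.mpr ht1)]
  have hlim : μ / 2 * d ^ 2 ≤ J₁ uhat - J₁ ustar := by
    have htend : Filter.Tendsto (fun t : ℝ => (1 - t) * (μ / 2 * d ^ 2))
        (nhdsWithin 0 (Set.Ioo (0:ℝ) 1)) (nhds (μ / 2 * d ^ 2)) := by
      have : Filter.Tendsto (fun t : ℝ => (1 - t) * (μ / 2 * d ^ 2))
          (nhds 0) (nhds ((1 - 0) * (μ / 2 * d ^ 2))) := by
        exact (Filter.Tendsto.const_sub 1 Filter.tendsto_id).mul_const _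
      simpa using this.mono_left nhdsWithin_le_nhds
    have hne : (nhdsWithin (0:ℝ) (Set.Ioo (0:ℝ) 1)).NeBot := by
      apply IsGLB.nhdsWithin_neBot
      · exact isGLB_Ioo one_pos
      · exact Set.nonempty_Ioo.mpr one_pos
    exact le_of_tendsto htend (Filter.eventually_of_mem self_mem_nhdsWithin key)
  -- d² ≤ 4 K_J M / μ
  have hd2 : d ^ 2 ≤ 4 * (K_J * M / μ) := by
    rw [show (4:ℝ) * (K_J * M / μ) = 4 * (K_J * M) / μ by ring, le_div_iff₀ hμ]
    nlinarith
  calc d = Real.sqrt (d ^ 2) := (Real.sqrt_sq (norm_nonneg _)).symm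
    _ ≤ Real.sqrt (4 * (K_J * M / μ)) := Real.sqrt_le_sqrt hd2
    _ = 2 * Real.sqrt (K_J * M / μ) := by
        rw [show (4:ℝ) = 2 ^ 2 by norm_num, Real.sqrt_mul (by positivity), Real.sqrt_sq (by norm_num)]
end

section
/- Let E be a real inner product space, U ⊆ E a nonempty convex set, μ > 0 and ε ≥ 0. Let f : E → ℝ be differentiable on U and μ-strongly convex on U, and let g : E → ℝ satisfy |f u − g u| ≤ ε for all u ∈ U. If u₁ ∈ U minimizes f over U and u₂ ∈ U minimizes g over U, then ‖u₁ − u₂‖ ≤ 2 · √(ε / μ). -/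
/-!
Since `u₁` minimizes `f`, strong convexity on the segment from `u₁` to `u₂`, with the segment
parameter tending to `0`, gives quadratic growth `f u₁ + μ/2 ‖u₂ - u₁‖² ≤ f u₂`. On the other hand, `u₂` minimizes `g`, which is
`ε`-close to `f`, so `f u₂ ≤ g u₂ + ε ≤ g u₁ + ε ≤ f u₁ + 2ε`. Hence `μ/2 ‖u₂ - u₁‖² ≤ 2ε`.
-/

open Filter Set Topology

lemma le_of_forall_mem_Ioo_one_sub_mul_le {a b : ℝ} (h : ∀ t ∈ Ioo (0 : ℝ) 1, (1 - t) * a ≤ b) :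
    a ≤ b := by
  have hlim : Tendsto (fun t : ℝ ↦ (1 - t) * a) (𝓝[>] 0) (𝓝 a) := by
    have : Tendsto (fun t : ℝ ↦ (1 - t) * a) (𝓝 0) (𝓝 ((1 - 0) * a)) :=
      ((continuous_const.sub continuous_id).mul continuous_const).tendsto 0
    simpa using this.mono_left nhdsWithin_le_nhds
  exact le_of_tendsto hlim (mem_of_superset (Ioo_mem_nhdsGT one_pos) h)

lemma UniformConvexOn.add_le_of_isMinOn {E : Type*} [NormedAddCommGroup E] [NormedSpace ℝ E]
    {s : Set E} {φ : ℝ → ℝ} {f : E → ℝ} {x y : E} (hf : UniformConvexOn s φ f)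
    (hx : x ∈ s) (hy : y ∈ s) (hmin : IsMinOn f s x) :
    f x + φ ‖y - x‖ ≤ f y := by
  suffices ∀ t ∈ Ioo (0 : ℝ) 1, (1 - t) * φ ‖y - x‖ ≤ f y - f x by
    linarith [le_of_forall_mem_Ioo_one_sub_mul_le this]
  rintro t ⟨ht₀, ht₁⟩
  have hseg : f x ≤ t * f y + (1 - t) * f x - t * (1 - t) * φ ‖y - x‖ :=
    (hmin (hf.1 hy hx ht₀.le (by linarith) (by ring))).trans
      (hf.2 hy hx ht₀.le (by linarith) (by ring))
  nlinarith

lemma le_two_mul_sqrt_div_of_mul_sq_le {m r ε : ℝ} (hm : 0 < m) (h : m / 2 * r ^ 2 ≤ 2 * ε) :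
    r ≤ 2 * √(ε / m) := by
  have hsq : (r / 2) ^ 2 ≤ ε / m := by
    rw [le_div_iff₀ hm]
    linarith
  linarith [Real.le_sqrt_of_sq_le hsq]

theorem strong_convex_perturbed_minimizer_bound_general
    {E : Type*} [NormedAddCommGroup E] [InnerProductSpace ℝ E]
    (U : Set E)
    (μ : ℝ) (hμ : 0 < μ) (ε : ℝ)
    (f g : E → ℝ)
    (hsc : StrongConvexOn U μ f)
    (hclose : ∀ u ∈ U, |f u - g u| ≤ ε)
    (u₁ u₂ : E) (hu₁ : u₁ ∈ U) (hu₂ : u₂ ∈ U)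
    (hmin₁ : IsMinOn f U u₁) (hmin₂ : IsMinOn g U u₂) :
    ‖u₁ - u₂‖ ≤ 2 * Real.sqrt (ε / μ) := by
  have hgrowth : f u₁ + μ / 2 * ‖u₂ - u₁‖ ^ 2 ≤ f u₂ :=
    UniformConvexOn.add_le_of_isMinOn hsc hu₁ hu₂ hmin₁
  have hgap : f u₂ ≤ f u₁ + 2 * ε := by
    obtain ⟨hclose₁, -⟩ := abs_le.mp (hclose u₁ hu₁)
    obtain ⟨-, hclose₂⟩ := abs_le.mp (hclose u₂ hu₂)
    have hg : g u₂ ≤ g u₁ := hmin₂ hu₁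
    linarith
  rw [norm_sub_rev]
  exact le_two_mul_sqrt_div_of_mul_sq_le hμ (by linarith)

/-- Abstract form of Proposition 1: a uniform `ε`-perturbation of a
differentiable, `μ`-strongly convex objective on a nonempty convex set moves
the constrained minimizer by at most `2 √(ε/μ)`. -/
theorem strong_convex_perturbed_minimizer_bound
    {E : Type*} [NormedAddCommGroup E] [InnerProductSpace ℝ E]
    (U : Set E) (hUne : U.Nonempty) (hUconvex : Convex ℝ U)
    (μ : ℝ) (hμ : 0 < μ) (ε : ℝ) (hε : 0 ≤ ε)
    (f g : E → ℝ)
    (hdiff : DifferentiableOn ℝ f U)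
    (hsc : StrongConvexOn U μ f)
    (hclose : ∀ u ∈ U, |f u - g u| ≤ ε)
    (u₁ u₂ : E) (hu₁ : u₁ ∈ U) (hu₂ : u₂ ∈ U)
    (hmin₁ : IsMinOn f U u₁) (hmin₂ : IsMinOn g U u₂) :
    ‖u₁ - u₂‖ ≤ 2 * Real.sqrt (ε / μ) :=
  strong_convex_perturbed_minimizer_bound_general U μ hμ ε f g hsc hclose u₁ u₂ hu₁ hu₂ hmin₁ hmin₂
end
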